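/- arXiv:2503.24003 — 4 statements merged into one kernel-verified Lean document; each statement's English description precedes it below -/
import Mathlib

section
/- Let d ≥ 3 be an integer and define Q(δ) = (K(δ) − 2)^{−(d−1)/4} (K(δ) + 2)^{(d+1)/4} for δ ∈ (0,1), where K(δ) = 2/(1 − (1−δ)^{2/(d−1)}). Then Q is convex on (0,1) and attains its global minimum uniquely at δ₀ = 1 − (1 − 1/d)^{(d−1)/2}; equivalently, K(δ₀) = 2d. -/
/-!
Write `a = 2 / (d - 1)`, which lies in `(0, 1]` for `d ≥ 3`, and `t = (1 - δ) ^ a`, so that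
`K = 2 / (1 - t)`. The logarithmic derivative of `Q` is
`G = (2 - (2 + a) t) / (2 (1 - δ) (2 - t) (1 - t))`, and `G'` is a positive multiple of
`E(a, t) = 2 (a - 1 + t)² + 2 (1 + a) (1 - t) (a t² + 2 (1 - t)² + (1 - a) (1 - t)) > 0`.
Hence `Q'' = Q (G² + G') > 0` and `Q` is strictly convex on `(0, 1)`. Since `2 + a = 2d / (d - 1)`,
`G` vanishes where `t = 1 - 1/d`, that is at `δ₀`, and a strictly convex function has its unique
minimum at a critical point.
-/

/-- `K(δ) = 2/(1 − (1−δ)^{2/(d−1)})` (real power). -/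
noncomputable def Kfun (d : ℕ) (δ : ℝ) : ℝ :=
  2 / (1 - (1 - δ) ^ (2 / ((d : ℝ) - 1)))

/-- `Q(δ) = (K(δ) − 2)^{−(d−1)/4} (K(δ) + 2)^{(d+1)/4}` (real powers). -/
noncomputable def Qfun (d : ℕ) (δ : ℝ) : ℝ :=
  (Kfun d δ - 2) ^ (-(((d : ℝ) - 1) / 4)) * (Kfun d δ + 2) ^ (((d : ℝ) + 1) / 4)

/-- The minimizer `δ₀ = 1 − (1 − 1/d)^{(d−1)/2}`. -/
noncomputable def delta0 (d : ℕ) : ℝ :=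
  1 - (1 - 1 / (d : ℝ)) ^ (((d : ℝ) - 1) / 2)

open Real Set

theorem HasDerivAt.rpow_const_mul_rpow_const {f g : ℝ → ℝ} {f' g' x : ℝ} (p q : ℝ)
    (hf : HasDerivAt f f' x) (hg : HasDerivAt g g' x) (hfx : 0 < f x) (hgx : 0 < g x) :
    HasDerivAt (fun y => f y ^ p * g y ^ q)
      (f x ^ p * g x ^ q * (p * f' / f x + q * g' / g x)) x := by
  refine ((hf.rpow_const (p := p) (.inl hfx.ne')).mul
    (hg.rpow_const (p := q) (.inl hgx.ne'))).congr_deriv ?_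
  rw [rpow_sub_one hfx.ne', rpow_sub_one hgx.ne']
  field_simp

theorem strictConvexOn_of_hasDerivAt2_pos {D : Set ℝ} (hD : Convex ℝ D) (hDo : IsOpen D)
    {f f' f'' : ℝ → ℝ} (hf : ∀ x ∈ D, HasDerivAt f (f' x) x)
    (hf' : ∀ x ∈ D, HasDerivAt f' (f'' x) x) (hf'' : ∀ x ∈ D, 0 < f'' x) :
    StrictConvexOn ℝ D f := by
  have hmono : StrictMonoOn f' D := by
    refine strictMonoOn_of_deriv_pos hD (fun x hx => (hf' x hx).continuousAt.continuousWithinAt)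
      fun x hx => ?_
    rw [hDo.interior_eq] at hx
    rw [(hf' x hx).deriv]
    exact hf'' x hx
  refine StrictMonoOn.strictConvexOn_of_deriv hD
    (fun x hx => (hf x hx).continuousAt.continuousWithinAt) ?_
  rw [hDo.interior_eq]
  exact hmono.congr fun x hx => ((hf x hx).deriv).symm

noncomputable def Kexp (d : ℕ) : ℝ := 2 / ((d : ℝ) - 1)

noncomputable def Kbase (d : ℕ) (δ : ℝ) : ℝ := (1 - δ) ^ Kexp d

noncomputable def logDerivQ (d : ℕ) (δ : ℝ) : ℝ :=
  (2 - (2 + Kexp d) * Kbase d δ) / (2 * (1 - δ) * (2 - Kbase d δ) * (1 - Kbase d δ))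

noncomputable def convexityPoly (a t : ℝ) : ℝ :=
  8 - (20 + 8 * a - 4 * a ^ 2) * t + (16 + 14 * a) * t ^ 2 - 2 * (a + 1) * (a + 2) * t ^ 3

theorem convexityPoly_pos {a t : ℝ} (ha : 0 < a) (ha₁ : a ≤ 1) (ht : t ≤ 1) :
    0 < convexityPoly a t := by
  have hsos : convexityPoly a t = 2 * (a - 1 + t) ^ 2 +
      2 * (1 + a) * (1 - t) * (a * t ^ 2 + 2 * (1 - t) ^ 2 + (1 - a) * (1 - t)) := by
    unfold convexityPoly; ring
  rw [hsos]
  rcases ht.eq_or_lt with rfl | ht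
  · simp only [sub_add_cancel, sub_self, mul_zero, add_zero]; positivity
  · have h₁ : 0 < 1 - t := by linarith
    have h₂ : 0 ≤ (1 - a) * (1 - t) := mul_nonneg (by linarith) h₁.le
    have h₃ : 0 < a * t ^ 2 + 2 * (1 - t) ^ 2 + (1 - a) * (1 - t) := by positivity
    positivity

section

variable {d : ℕ} {δ : ℝ}

theorem Kexp_pos (hd : 2 ≤ d) : 0 < Kexp d := by
  have : (2 : ℝ) ≤ d := by exact_mod_cast hd
  unfold Kexp; apply div_pos <;> linarith

theorem Kexp_le_one (hd : 3 ≤ d) : Kexp d ≤ 1 := by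
  have : (3 : ℝ) ≤ d := by exact_mod_cast hd
  unfold Kexp; rw [div_le_one] <;> linarith

theorem Kfun_eq : Kfun d δ = 2 / (1 - Kbase d δ) := rfl

theorem Kbase_mem_Ioo (hd : 2 ≤ d) (hδ : δ ∈ Ioo 0 1) : Kbase d δ ∈ Ioo 0 1 :=
  ⟨rpow_pos_of_pos (by linarith [hδ.2]) _,
    rpow_lt_one (by linarith [hδ.2]) (by linarith [hδ.1]) (Kexp_pos hd)⟩

theorem hasDerivAt_Kbase (hδ : δ < 1) :
    HasDerivAt (Kbase d) (-(Kexp d * Kbase d δ / (1 - δ))) δ := by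
  have hu : 0 < 1 - δ := by linarith
  refine (((hasDerivAt_id δ).const_sub 1).rpow_const (p := Kexp d) (.inl hu.ne')).congr_deriv ?_
  simp only [id, Kbase]
  rw [rpow_sub_one hu.ne']
  ring

theorem hasDerivAt_Kfun (hd : 2 ≤ d) (hδ : δ ∈ Ioo 0 1) :
    HasDerivAt (Kfun d)
      (-(2 * Kexp d * Kbase d δ / ((1 - δ) * (1 - Kbase d δ) ^ 2))) δ := by
  have ht := Kbase_mem_Ioo hd hδ
  have hu : 1 - δ ≠ 0 := by linarith [hδ.2]
  have h1t : 1 - Kbase d δ ≠ 0 := by linarith [ht.2]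
  refine ((hasDerivAt_const δ (2 : ℝ)).div ((hasDerivAt_Kbase hδ.2).const_sub 1)
    h1t).congr_deriv ?_
  field_simp
  ring

theorem Kfun_sub_two (hd : 2 ≤ d) (hδ : δ ∈ Ioo 0 1) :
    Kfun d δ - 2 = 2 * Kbase d δ / (1 - Kbase d δ) := by
  have h1t : 1 - Kbase d δ ≠ 0 := by linarith [(Kbase_mem_Ioo hd hδ).2]
  rw [Kfun_eq]; field_simp; ring

theorem Kfun_add_two (hd : 2 ≤ d) (hδ : δ ∈ Ioo 0 1) :
    Kfun d δ + 2 = 2 * (2 - Kbase d δ) / (1 - Kbase d δ) := by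
  have h1t : 1 - Kbase d δ ≠ 0 := by linarith [(Kbase_mem_Ioo hd hδ).2]
  rw [Kfun_eq]; field_simp; ring

theorem Kfun_sub_two_pos (hd : 2 ≤ d) (hδ : δ ∈ Ioo 0 1) : 0 < Kfun d δ - 2 := by
  obtain ⟨ht₀, ht₁⟩ := Kbase_mem_Ioo hd hδ
  have : 0 < 1 - Kbase d δ := by linarith
  rw [Kfun_sub_two hd hδ]; positivity

theorem Kfun_add_two_pos (hd : 2 ≤ d) (hδ : δ ∈ Ioo 0 1) : 0 < Kfun d δ + 2 := by
  obtain ⟨ht₀, ht₁⟩ := Kbase_mem_Ioo hd hδ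
  have : 0 < 1 - Kbase d δ := by linarith
  have : 0 < 2 - Kbase d δ := by linarith
  rw [Kfun_add_two hd hδ]; positivity

theorem Qfun_pos (hd : 2 ≤ d) (hδ : δ ∈ Ioo 0 1) : 0 < Qfun d δ :=
  mul_pos (rpow_pos_of_pos (Kfun_sub_two_pos hd hδ) _)
    (rpow_pos_of_pos (Kfun_add_two_pos hd hδ) _)

theorem hasDerivAt_Qfun (hd : 2 ≤ d) (hδ : δ ∈ Ioo 0 1) :
    HasDerivAt (Qfun d) (Qfun d δ * logDerivQ d δ) δ := by
  have hK := hasDerivAt_Kfun hd hδ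
  refine ((hK.sub_const 2).rpow_const_mul_rpow_const _ _ (hK.add_const 2)
    (Kfun_sub_two_pos hd hδ) (Kfun_add_two_pos hd hδ)).congr_deriv ?_
  obtain ⟨ht₀, ht₁⟩ := Kbase_mem_Ioo hd hδ
  have : (2 : ℝ) ≤ d := by exact_mod_cast hd
  have hd1 : (d : ℝ) - 1 ≠ 0 := by linarith
  have hu : 1 - δ ≠ 0 := by linarith [hδ.2]
  have h1t : 1 - Kbase d δ ≠ 0 := by linarith
  have h2t : 2 - Kbase d δ ≠ 0 := by linarith
  show Qfun d δ * _ = _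
  congr 1
  rw [Kfun_sub_two hd hδ, Kfun_add_two hd hδ]
  unfold logDerivQ Kexp
  field_simp
  ring

theorem hasDerivAt_logDerivQ (hd : 2 ≤ d) (hδ : δ ∈ Ioo 0 1) :
    HasDerivAt (logDerivQ d) (convexityPoly (Kexp d) (Kbase d δ) /
      (2 * (1 - δ) * (2 - Kbase d δ) * (1 - Kbase d δ)) ^ 2) δ := by
  obtain ⟨ht₀, ht₁⟩ := Kbase_mem_Ioo hd hδ
  have hu : 0 < 1 - δ := by linarith [hδ.2]
  have ht := hasDerivAt_Kbase (d := d) hδ.2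
  have hden : 2 * (1 - δ) * (2 - Kbase d δ) * (1 - Kbase d δ) ≠ 0 := by
    have : 0 < 2 - Kbase d δ := by linarith
    have : 0 < 1 - Kbase d δ := by linarith
    positivity
  refine (((ht.const_mul (2 + Kexp d)).const_sub 2).div
    (((((hasDerivAt_id δ).const_sub 1).const_mul 2).mul (ht.const_sub 2)).mul (ht.const_sub 1))
    hden).congr_deriv ?_
  simp only [Pi.mul_apply, id]
  unfold convexityPoly
  field_simp
  ring

theorem Qfun_strictConvexOn (hd : 3 ≤ d) : StrictConvexOn ℝ (Ioo 0 1) (Qfun d) := by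
  have hd2 : 2 ≤ d := by omega
  refine strictConvexOn_of_hasDerivAt2_pos (convex_Ioo 0 1) isOpen_Ioo
    (fun δ hδ => hasDerivAt_Qfun hd2 hδ)
    (fun δ hδ => (hasDerivAt_Qfun hd2 hδ).mul (hasDerivAt_logDerivQ hd2 hδ)) fun δ hδ => ?_
  obtain ⟨ht₀, ht₁⟩ := Kbase_mem_Ioo hd2 hδ
  have hE := convexityPoly_pos (Kexp_pos hd2) (Kexp_le_one hd) ht₁.le
  have hQ := Qfun_pos hd2 hδ
  have hD : 0 < (2 * (1 - δ) * (2 - Kbase d δ) * (1 - Kbase d δ)) ^ 2 := by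
    have : 0 < 1 - δ := by linarith [hδ.2]
    have : 0 < 2 - Kbase d δ := by linarith
    have : 0 < 1 - Kbase d δ := by linarith
    positivity
  rw [mul_assoc]
  exact add_pos_of_nonneg_of_pos (mul_nonneg hQ.le (mul_self_nonneg _))
    (mul_pos hQ (div_pos hE hD))

theorem delta0_mem_Ioo (hd : 2 ≤ d) : delta0 d ∈ Ioo 0 1 := by
  have : (2 : ℝ) ≤ d := by exact_mod_cast hd
  have hb₀ : 0 < 1 - 1 / (d : ℝ) := by
    rw [sub_pos, div_lt_one] <;> linarith
  have hb₁ : 1 - 1 / (d : ℝ) < 1 := by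
    have : 0 < 1 / (d : ℝ) := by positivity
    linarith
  have h₀ := rpow_pos_of_pos hb₀ (((d : ℝ) - 1) / 2)
  have h₁ := rpow_lt_one hb₀.le hb₁ (by linarith : 0 < ((d : ℝ) - 1) / 2)
  unfold delta0
  constructor <;> linarith

theorem Kbase_delta0 (hd : 2 ≤ d) : Kbase d (delta0 d) = 1 - 1 / (d : ℝ) := by
  have : (2 : ℝ) ≤ d := by exact_mod_cast hd
  have hb : 0 ≤ 1 - 1 / (d : ℝ) := by
    rw [sub_nonneg, div_le_one] <;> linarith
  have hd1 : (d : ℝ) - 1 ≠ 0 := by linarith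
  rw [Kbase, delta0, sub_sub_cancel, ← rpow_mul hb,
    show ((d : ℝ) - 1) / 2 * Kexp d = 1 by unfold Kexp; field_simp, rpow_one]

theorem Kfun_delta0 (hd : 2 ≤ d) : Kfun d (delta0 d) = 2 * d := by
  have : (2 : ℝ) ≤ d := by exact_mod_cast hd
  rw [Kfun_eq, Kbase_delta0 hd, sub_sub_cancel]
  field_simp

theorem logDerivQ_delta0 (hd : 2 ≤ d) : logDerivQ d (delta0 d) = 0 := by
  have : (2 : ℝ) ≤ d := by exact_mod_cast hd
  have hd1 : (d : ℝ) - 1 ≠ 0 := by linarith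
  rw [logDerivQ, Kbase_delta0 hd, div_eq_zero_iff]
  left
  unfold Kexp
  field_simp
  ring

theorem Qfun_isMinOn (hd : 3 ≤ d) : IsMinOn (Qfun d) (Ioo 0 1) (delta0 d) := by
  have hd2 : 2 ≤ d := by omega
  have hmem := delta0_mem_Ioo hd2
  refine (Qfun_strictConvexOn hd).convexOn.isMinOn_of_rightDeriv_eq_zero
    (by rwa [interior_Ioo]) ?_
  rw [((hasDerivAt_Qfun hd2 hmem).hasDerivWithinAt).derivWithin (uniqueDiffWithinAt_Ioi _),
    logDerivQ_delta0 hd2, mul_zero]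

end

/-- for `d ≥ 3`, `Q` is convex on `(0,1)` and attains its global minimum
over `(0,1)` uniquely at `δ₀ = 1 − (1 − 1/d)^{(d−1)/2}`; equivalently `K(δ₀) = 2d`. -/
theorem Qfun_convex_and_unique_min (d : ℕ) (hd : 3 ≤ d) :
    delta0 d ∈ Set.Ioo (0 : ℝ) 1 ∧
    ConvexOn ℝ (Set.Ioo 0 1) (Qfun d) ∧
    (∀ δ ∈ Set.Ioo (0 : ℝ) 1, Qfun d (delta0 d) ≤ Qfun d δ) ∧
    (∀ δ ∈ Set.Ioo (0 : ℝ) 1, δ ≠ delta0 d → Qfun d (delta0 d) < Qfun d δ) ∧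
    Kfun d (delta0 d) = 2 * d := by
  have hmem := delta0_mem_Ioo (by omega : 2 ≤ d)
  have hconv := Qfun_strictConvexOn hd
  have hmin := Qfun_isMinOn hd
  refine ⟨hmem, hconv.convexOn, fun δ hδ => hmin hδ, fun δ hδ hne => ?_,
    Kfun_delta0 (by omega)⟩
  refine (hmin hδ).lt_of_ne fun heq => hne ?_
  exact hconv.eq_of_isMinOn (fun y hy => heq ▸ hmin hy) hmin hδ hmem
end

section
/- Let d ≥ 3 be an integer and define, for δ ∈ (0,1) with K(δ) ≠ d−1, R(δ) = (K(δ) − 2)^{−(d−3)/2} K(δ)^{d−1} (K(δ) + 2)^{−(d+1)/2} ((d−1)/K(δ) − 1)^{−2}, where K(δ) = 2/(1 − (1−δ)^{2/(d−1)}). Then R(δ) → 1 as δ → 0⁺; that is, the asymptotic relative efficiency ARE = R(δ)^{−1} of the ESL estimator relative to least squares tends to 1 as δ → 0. -/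
/-- `R(δ) = (K(δ)−2)^{−(d−3)/2} K(δ)^{d−1} (K(δ)+2)^{−(d+1)/2} ((d−1)/K(δ) − 1)^{−2}`,
where the fractional exponents are real powers and the last factor is an integer power. -/
noncomputable def Rfun (d : ℕ) (δ : ℝ) : ℝ :=
  (Kfun d δ - 2) ^ (-(((d : ℝ) - 3) / 2)) * (Kfun d δ) ^ ((d : ℝ) - 1) *
    (Kfun d δ + 2) ^ (-(((d : ℝ) + 1) / 2)) *
    (((d : ℝ) - 1) / Kfun d δ - 1) ^ (-2 : ℤ)

/-!
As `δ → 0⁺` we have `(1 − δ)^{2/(d−1)} → 1⁻`, so `K(δ) → ∞`. The three real powers in `R`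
have exponents summing to `0`, so after factoring `K` out of `K ∓ 2` their product is
`(1 − 2/K)^a (1 + 2/K)^c → 1`, while `((d−1)/K − 1)^{−2} → (−1)^{−2} = 1`.
-/

open Filter Topology

lemma tendsto_one_sub_one_sub_rpow_nhdsGT_zero {p : ℝ} (hp : 0 < p) :
    Tendsto (fun δ : ℝ => 1 - (1 - δ) ^ p) (𝓝[>] 0) (𝓝[>] 0) := by
  refine tendsto_nhdsWithin_of_tendsto_nhds_of_eventually_within _ ?_ ?_
  · have hcont : ContinuousAt (fun δ : ℝ => 1 - (1 - δ) ^ p) 0 :=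
      continuousAt_const.sub
        ((continuousAt_const.sub continuousAt_id).rpow_const (Or.inl (by norm_num)))
    simpa using hcont.tendsto.mono_left nhdsWithin_le_nhds
  · filter_upwards [Ioo_mem_nhdsGT (show (0 : ℝ) < 1 by norm_num)] with δ ⟨hδ0, hδ1⟩
    exact sub_pos.mpr (Real.rpow_lt_one (by linarith) (by linarith) hp)

lemma Kfun_tendsto_atTop {d : ℕ} (hd : 1 < d) :
    Tendsto (Kfun d) (𝓝[>] 0) atTop := by
  have hexp : 0 < 2 / ((d : ℝ) - 1) :=
    div_pos two_pos (sub_pos.mpr (by exact_mod_cast hd))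
  exact (tendsto_inv_nhdsGT_zero.const_mul_atTop two_pos).comp
    (tendsto_one_sub_one_sub_rpow_nhdsGT_zero hexp)

lemma eventually_add_rpow_eq_rpow_mul_one_add_div_rpow_atTop (u p : ℝ) :
    ∀ᶠ x in atTop, (x + u) ^ p = x ^ p * (1 + u / x) ^ p := by
  filter_upwards [eventually_gt_atTop 0, eventually_gt_atTop (-u)] with x hx hux
  have hnonneg : 0 ≤ 1 + u / x := by
    rw [show 1 + u / x = (x + u) / x by field_simp]
    exact div_nonneg (by linarith) hx.le
  rw [← Real.mul_rpow hx.le hnonneg]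
  congr 1
  field_simp

lemma tendsto_one_add_div_rpow_atTop (u p : ℝ) :
    Tendsto (fun x : ℝ => (1 + u / x) ^ p) atTop (𝓝 1) := by
  simpa using ((tendsto_const_nhds.div_atTop tendsto_id).const_add 1).rpow_const
    (p := p) (Or.inl (by norm_num : (1 : ℝ) + 0 ≠ 0))

lemma tendsto_add_rpow_mul_rpow_mul_add_rpow_atTop (s t : ℝ) {a b c : ℝ}
    (habc : a + b + c = 0) :
    Tendsto (fun x : ℝ => (x + s) ^ a * x ^ b * (x + t) ^ c) atTop (𝓝 1) := by
  have heq : ∀ᶠ x in atTop, (1 + s / x) ^ a * (1 + t / x) ^ c =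
      (x + s) ^ a * x ^ b * (x + t) ^ c := by
    filter_upwards [eventually_add_rpow_eq_rpow_mul_one_add_div_rpow_atTop s a,
      eventually_add_rpow_eq_rpow_mul_one_add_div_rpow_atTop t c, eventually_gt_atTop 0]
      with x hs ht hx
    have hxpow : x ^ a * x ^ b * x ^ c = 1 := by
      rw [← Real.rpow_add hx, ← Real.rpow_add hx, habc, Real.rpow_zero]
    rw [hs, ht]
    linear_combination -((1 + s / x) ^ a * (1 + t / x) ^ c) * hxpow
  simpa using ((tendsto_one_add_div_rpow_atTop s a).mul
    (tendsto_one_add_div_rpow_atTop t c)).congr' heq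

lemma tendsto_div_sub_one_zpow_neg_two_atTop (c : ℝ) :
    Tendsto (fun x : ℝ => (c / x - 1) ^ (-2 : ℤ)) atTop (𝓝 1) := by
  have hbase : Tendsto (fun x : ℝ => c / x - 1) atTop (𝓝 (0 - 1)) :=
    (tendsto_const_nhds.div_atTop tendsto_id).sub_const 1
  simpa using hbase.zpow₀ (-2) (Or.inl (by norm_num))

/-- for `d ≥ 3`, `R(δ) → 1` as `δ → 0⁺`, i.e. the asymptotic relative
efficiency `R(δ)⁻¹` of the ESL estimator relative to least squares tends to `1`. -/
theorem Rfun_tendsto_one_at_zero (d : ℕ) (hd : 3 ≤ d) :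
    Filter.Tendsto (Rfun d) (nhdsWithin 0 (Set.Ioi 0)) (nhds 1) := by
  have hpowers := tendsto_add_rpow_mul_rpow_mul_add_rpow_atTop (-2) 2
    (a := -(((d : ℝ) - 3) / 2)) (b := (d : ℝ) - 1) (c := -(((d : ℝ) + 1) / 2)) (by ring)
  have hlast := tendsto_div_sub_one_zpow_neg_two_atTop ((d : ℝ) - 1)
  have hcomp := (hpowers.mul hlast).comp (Kfun_tendsto_atTop (by omega : 1 < d))
  simp only [← sub_eq_add_neg, mul_one] at hcomp
  exact hcomp
end

section
/- Let d ≥ 4 be an integer and define, for δ ∈ (0,1) with K(δ) ≠ d−1, R(δ) = (K(δ) − 2)^{−(d−3)/2} K(δ)^{d−1} (K(δ) + 2)^{−(d+1)/2} ((d−1)/K(δ) − 1)^{−2}, where K(δ) = 2/(1 − (1−δ)^{2/(d−1)}). Then R is not monotone on its domain: there exist 0 < δ₁ < δ₂ < δ₃ < 1, each with K(δᵢ) ≠ d−1, such that R(δ₁) < R(δ₂) and R(δ₃) < R(δ₂). -/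
section aux

open Filter Topology Set

variable {d : ℕ}

lemma c_ge (hd : 4 ≤ d) : (4 : ℝ) ≤ (d : ℝ) := by exact_mod_cast hd

lemma p_pos (hd : 4 ≤ d) : 0 < 2 / ((d : ℝ) - 1) := by
  have := c_ge hd
  apply div_pos <;> linarith

/-- K is strictly antitone on (0,1). -/
lemma K_strictAntiOn (hd : 4 ≤ d) : StrictAntiOn (Kfun d) (Set.Ioo 0 1) := by
  intro a ha b hb hab
  have hc := c_ge hd
  have hp := p_pos hd
  set p := 2 / ((d : ℝ) - 1) with hpdef
  have h1b : (0:ℝ) < 1 - b := by linarith [hb.2]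
  have h1a : 1 - a < 1 := by linarith [ha.1]
  have hba : 1 - b < 1 - a := by linarith
  have hlt : (1 - b) ^ p < (1 - a) ^ p :=
    Real.rpow_lt_rpow h1b.le hba hp
  have hDa : 0 < 1 - (1 - a) ^ p := by
    have : (1 - a) ^ p < 1 := Real.rpow_lt_one (by linarith [ha.2]) h1a hp
    linarith
  have hDb : 1 - (1 - a) ^ p < 1 - (1 - b) ^ p := by linarith
  unfold Kfun
  exact div_lt_div_of_pos_left (by norm_num) hDa hDb

lemma delta_star_mem (hd : 4 ≤ d) :
    1 - (((d:ℝ) - 3) / ((d:ℝ) - 1)) ^ (((d:ℝ) - 1) / 2) ∈ Set.Ioo (0:ℝ) 1 := by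
  have hc := c_ge hd
  have hb0 : (0:ℝ) < ((d:ℝ) - 3) / ((d:ℝ) - 1) := by
    apply div_pos <;> linarith
  have hb1 : ((d:ℝ) - 3) / ((d:ℝ) - 1) < 1 := by
    rw [div_lt_one (by linarith)]; linarith
  constructor
  · have : (((d:ℝ) - 3) / ((d:ℝ) - 1)) ^ (((d:ℝ) - 1) / 2) < 1 :=
      Real.rpow_lt_one hb0.le hb1 (by apply div_pos <;> linarith)
    linarith
  · have : 0 < (((d:ℝ) - 3) / ((d:ℝ) - 1)) ^ (((d:ℝ) - 1) / 2) :=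
      Real.rpow_pos_of_pos hb0 _
    linarith

lemma K_delta_star (hd : 4 ≤ d) :
    Kfun d (1 - (((d:ℝ) - 3) / ((d:ℝ) - 1)) ^ (((d:ℝ) - 1) / 2)) = (d:ℝ) - 1 := by
  have hc := c_ge hd
  have hb0 : (0:ℝ) < ((d:ℝ) - 3) / ((d:ℝ) - 1) := by
    apply div_pos <;> linarith
  unfold Kfun
  have h1 : (1 : ℝ) - (1 - (((d:ℝ) - 3) / ((d:ℝ) - 1)) ^ (((d:ℝ) - 1) / 2))
      = (((d:ℝ) - 3) / ((d:ℝ) - 1)) ^ (((d:ℝ) - 1) / 2) := by ring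
  rw [h1, ← Real.rpow_mul hb0.le]
  have hne : (d:ℝ) - 1 ≠ 0 := by linarith
  have he : ((d:ℝ) - 1) / 2 * (2 / ((d:ℝ) - 1)) = 1 := by
    field_simp
  rw [he, Real.rpow_one]
  have h2 : 1 - ((d:ℝ) - 3) / ((d:ℝ) - 1) = 2 / ((d:ℝ) - 1) := by
    field_simp
    ring
  rw [h2]
  rw [div_div_eq_mul_div, div_eq_iff (by norm_num : (2:ℝ) ≠ 0)]
  ring


lemma K_ne_of_ne (hd : 4 ≤ d) {δ : ℝ} (hδ : δ ∈ Set.Ioo (0:ℝ) 1)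
    (hne : δ ≠ 1 - (((d:ℝ) - 3) / ((d:ℝ) - 1)) ^ (((d:ℝ) - 1) / 2)) :
    Kfun d δ ≠ (d:ℝ) - 1 := by
  set δs := 1 - (((d:ℝ) - 3) / ((d:ℝ) - 1)) ^ (((d:ℝ) - 1) / 2) with hδsdef
  have hδs := delta_star_mem hd
  have hK := K_delta_star hd
  rcases hne.lt_or_gt with h | h
  · have := K_strictAntiOn hd hδ hδs h
    rw [hK] at this
    exact this.ne'
  · have := K_strictAntiOn hd hδs hδ h
    rw [hK] at this
    exact this.ne

lemma key (d : ℕ) (hd : 4 ≤ d) :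
    ∃ δ₁ δ₂ δ₃ : ℝ,
      δ₁ ∈ Set.Ioo (0 : ℝ) 1 ∧ δ₂ ∈ Set.Ioo (0 : ℝ) 1 ∧ δ₃ ∈ Set.Ioo (0 : ℝ) 1 ∧
      δ₁ < δ₂ ∧ δ₂ < δ₃ ∧
      Kfun d δ₁ ≠ (d : ℝ) - 1 ∧ Kfun d δ₂ ≠ (d : ℝ) - 1 ∧ Kfun d δ₃ ≠ (d : ℝ) - 1 ∧
      Rfun d δ₁ < Rfun d δ₂ ∧ Rfun d δ₃ < Rfun d δ₂ := by
  have hc := c_ge hd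
  obtain ⟨δs, hδs, hK, hKneq⟩ :
      ∃ δs, δs ∈ Set.Ioo (0:ℝ) 1 ∧ Kfun d δs = (d:ℝ) - 1 ∧
        ∀ δ ∈ Set.Ioo (0:ℝ) 1, δ ≠ δs → Kfun d δ ≠ (d:ℝ) - 1 :=
    ⟨_, delta_star_mem hd, K_delta_star hd, fun δ h hne => K_ne_of_ne hd h hne⟩
  set δ₁ := δs / 2 with hδ₁def
  set δ₃ := (1 + δs) / 2 with hδ₃def
  have hδ₁ : δ₁ ∈ Set.Ioo (0:ℝ) 1 := ⟨by rw [hδ₁def]; linarith [hδs.1], by rw [hδ₁def]; linarith [hδs.2]⟩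
  have hδ₃ : δ₃ ∈ Set.Ioo (0:ℝ) 1 := ⟨by rw [hδ₃def]; linarith [hδs.1], by rw [hδ₃def]; linarith [hδs.2]⟩
  have h1s : δ₁ < δs := by rw [hδ₁def]; linarith [hδs.1]
  have hs3 : δs < δ₃ := by rw [hδ₃def]; linarith [hδs.2]
  -- continuity of K at δs
  have hbase : (0:ℝ) < 1 - δs := by linarith [hδs.2]
  have hDne : 1 - (1 - δs) ^ (2 / ((d:ℝ) - 1)) ≠ 0 := by
    intro h
    have h0 : Kfun d δs = 0 := by unfold Kfun; rw [h, div_zero]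
    rw [hK] at h0
    linarith
  have hKne0 : Kfun d δs ≠ 0 := by rw [hK]; intro h; linarith
  have hKcont : ContinuousAt (Kfun d) δs := by
    unfold Kfun
    exact continuousAt_const.div
      ((continuousAt_const.sub
        ((continuous_const.sub continuous_id).continuousAt.rpow_const
          (Or.inl hbase.ne')))) hDne
  -- the bounded factor
  set hf : ℝ → ℝ := fun δ =>
    (Kfun d δ - 2) ^ (-(((d : ℝ) - 3) / 2)) * (Kfun d δ) ^ ((d : ℝ) - 1) *
      (Kfun d δ + 2) ^ (-(((d : ℝ) + 1) / 2)) with hfdef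
  have hKm2 : Kfun d δs - 2 ≠ 0 := by rw [hK]; intro h; linarith
  have hKp2 : Kfun d δs + 2 ≠ 0 := by rw [hK]; intro h; linarith
  have hfc : ContinuousAt hf δs := by
    exact (((hKcont.sub continuousAt_const).rpow_const (Or.inl hKm2)).mul
      (hKcont.rpow_const (Or.inl hKne0))).mul
      ((hKcont.add continuousAt_const).rpow_const (Or.inl hKp2))
  have hL : 0 < hf δs := by
    rw [hfdef]
    simp only [hK]
    have h1 : (0:ℝ) < (d:ℝ) - 1 - 2 := by linarith
    have h2 : (0:ℝ) < (d:ℝ) - 1 := by linarith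
    have h3 : (0:ℝ) < (d:ℝ) - 1 + 2 := by linarith
    positivity
  -- the exploding factor
  set u : ℝ → ℝ := fun δ => ((d:ℝ) - 1) / Kfun d δ - 1 with hudef
  have hu0 : u δs = 0 := by rw [hudef]; simp only [hK]; rw [div_self (by intro h; linarith)]; norm_num
  have hucont : ContinuousAt u δs :=
    (continuousAt_const.div hKcont hKne0).sub continuousAt_const
  have hRfact : ∀ δ, Rfun d δ = hf δ * ((u δ) ^ 2)⁻¹ := by
    intro δ
    simp only [Rfun, hfdef, hudef, zpow_neg, zpow_two, pow_two]
  set l := nhdsWithin δs {δs}ᶜ with hldef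
  have hmem : ∀ᶠ δ in l, δ ∈ Set.Ioo (0:ℝ) 1 :=
    nhdsWithin_le_nhds (isOpen_Ioo.mem_nhds hδs)
  have hnev : ∀ᶠ δ in l, δ ≠ δs := eventually_mem_nhdsWithin
  have hune : ∀ᶠ δ in l, u δ ≠ 0 := by
    filter_upwards [hmem, hnev] with δ h1 h2
    intro h0
    have hK0 : Kfun d δ ≠ 0 := by
      intro hz
      rw [hudef] at h0
      simp only [hz, div_zero] at h0
      norm_num at h0
    have : ((d:ℝ) - 1) / Kfun d δ = 1 := by
      rw [hudef] at h0; linarith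
    have hKd : Kfun d δ = (d:ℝ) - 1 := by
      field_simp at this
      linarith
    exact hKneq δ h1 h2 hKd
  have husq : Filter.Tendsto (fun δ => u δ ^ 2) l (nhdsWithin 0 (Set.Ioi 0)) := by
    rw [tendsto_nhdsWithin_iff]
    constructor
    · have : Filter.Tendsto u l (nhds 0) := by
        have := hucont.continuousWithinAt (s := {δs}ᶜ)
        rwa [ContinuousWithinAt, hu0] at this
      simpa using this.pow 2
    · filter_upwards [hune] with δ h
      exact pow_two_pos_of_ne_zero h
  have hgtend : Filter.Tendsto (fun δ => (u δ ^ 2)⁻¹) l Filter.atTop := by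
    have := husq.inv_tendsto_nhdsGT_zero
    simpa [Pi.inv_def] using this
  have hftend : Filter.Tendsto hf l (nhds (hf δs)) := hfc.continuousWithinAt
  have hRtop : Filter.Tendsto (Rfun d) l Filter.atTop := by
    have h := Filter.Tendsto.pos_mul_atTop hL hftend hgtend
    exact h.congr fun δ => (hRfact δ).symm
  have hev1 : ∀ᶠ δ in l, max (Rfun d δ₁) (Rfun d δ₃) < Rfun d δ :=
    hRtop.eventually_gt_atTop _
  have hev2 : ∀ᶠ δ in l, δ ∈ Set.Ioo δ₁ δ₃ :=
    nhdsWithin_le_nhds (isOpen_Ioo.mem_nhds ⟨h1s, hs3⟩)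
  obtain ⟨δ₂, hM, hIoo, hne2⟩ := (hev1.and (hev2.and hnev)).exists
  have hδ₂ : δ₂ ∈ Set.Ioo (0:ℝ) 1 := ⟨lt_trans hδ₁.1 hIoo.1, lt_trans hIoo.2 hδ₃.2⟩
  exact ⟨δ₁, δ₂, δ₃, hδ₁, hδ₂, hδ₃, hIoo.1, hIoo.2,
    hKneq δ₁ hδ₁ h1s.ne, hKneq δ₂ hδ₂ hne2, hKneq δ₃ hδ₃ hs3.ne',
    lt_of_le_of_lt (le_max_left _ _) hM, lt_of_le_of_lt (le_max_right _ _) hM⟩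

end aux

theorem Rfun_not_monotone (d : ℕ) (hd : 4 ≤ d) :
    ∃ δ₁ δ₂ δ₃ : ℝ,
      δ₁ ∈ Set.Ioo (0 : ℝ) 1 ∧ δ₂ ∈ Set.Ioo (0 : ℝ) 1 ∧ δ₃ ∈ Set.Ioo (0 : ℝ) 1 ∧
      δ₁ < δ₂ ∧ δ₂ < δ₃ ∧
      Kfun d δ₁ ≠ (d : ℝ) - 1 ∧ Kfun d δ₂ ≠ (d : ℝ) - 1 ∧ Kfun d δ₃ ≠ (d : ℝ) - 1 ∧
      Rfun d δ₁ < Rfun d δ₂ ∧ Rfun d δ₃ < Rfun d δ₂ :=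
  key d hd
end

section
/- For d = 10, there exists δ ∈ (0,1) with K(δ) ≠ d−1 such that R(δ) < 1, where K(δ) = 2/(1 − (1−δ)^{2/(d−1)}) and R(δ) = (K(δ) − 2)^{−(d−3)/2} K(δ)^{d−1} (K(δ) + 2)^{−(d+1)/2} ((d−1)/K(δ) − 1)^{−2}; that is, for ten-dimensional spherical responses there is a choice of tuning constant δ making the asymptotic relative efficiency R(δ)^{−1} of the exponential squared loss estimator strictly greater than that of the least squares estimator. -/
/-- for `d = 10`, there is a tuning constant `δ ∈ (0,1)` with
`K(δ) ≠ d − 1 = 9` such that `R(δ) < 1`, i.e. the ESL estimator is asymptotically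
strictly more efficient than least squares. -/
theorem Rfun_lt_one_d10 :
    ∃ δ ∈ Set.Ioo (0 : ℝ) 1, Kfun 10 δ ≠ 9 ∧ Rfun 10 δ < 1 := by
  have hK : Kfun 10 (1 - (2:ℝ) ^ (-(9/2) : ℝ)) = 4 := by
    unfold Kfun
    have h1 : (1 - (1 - (2:ℝ) ^ (-(9/2) : ℝ))) = (2:ℝ) ^ (-(9/2) : ℝ) := by ring
    rw [h1, ← Real.rpow_mul (by norm_num)]
    norm_num
  refine ⟨1 - (2:ℝ) ^ (-(9/2) : ℝ), ⟨?_, ?_⟩, by rw [hK]; norm_num, ?_⟩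
  · have h1 : (2:ℝ) ^ (-(9/2) : ℝ) < 1 :=
      Real.rpow_lt_one_of_one_lt_of_neg (by norm_num) (by norm_num)
    linarith
  · have h0 : (0:ℝ) < (2:ℝ) ^ (-(9/2) : ℝ) := Real.rpow_pos_of_pos (by norm_num) _
    linarith
  · unfold Rfun
    rw [hK]
    norm_num
    have ha : (2:ℝ) ^ (-(7/2):ℝ) * (2:ℝ) ^ (-(7/2):ℝ) = 1/128 := by
      rw [← Real.rpow_add (by norm_num)]; norm_num
    have hb : (6:ℝ) ^ (-(11/2):ℝ) * (6:ℝ) ^ (-(11/2):ℝ) = 1/362797056 := by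
      rw [← Real.rpow_add (by norm_num)]; norm_num
    have ha0 : (0:ℝ) < (2:ℝ) ^ (-(7/2):ℝ) := Real.rpow_pos_of_pos (by norm_num) _
    have hb0 : (0:ℝ) < (6:ℝ) ^ (-(11/2):ℝ) := Real.rpow_pos_of_pos (by norm_num) _
    nlinarith [mul_pos ha0 hb0,
      sq_nonneg ((2:ℝ) ^ (-(7/2):ℝ) * (6:ℝ) ^ (-(11/2):ℝ) - 1/46656)]
end
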